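/- arXiv:2511.22492 — 8 statements merged into one kernel-verified Lean document; each statement's English description precedes it below -/
import Mathlib

section
/- For a connected graph G of order n ≥ k ≥ 2, the Steiner (k, k')-radii satisfy the chain Sr_{k,1}(G) ≥ Sr_{k,2}(G) ≥ ⋯ ≥ Sr_{k,k}(G). -/
open SimpleGraph

/-- The Steiner distance of a vertex set `S` in `G`: the minimum number of edges of a
connected subgraph of `G` whose vertex set contains `S`. -/
noncomputable def steinerDist {V : Type*} (G : SimpleGraph V) (S : Finset V) : ℕ :=
  sInf {n | ∃ H : G.Subgraph, H.Connected ∧ ↑S ⊆ H.verts ∧ H.edgeSet.ncard = n}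

/-- The Steiner `k`-diameter of `G`: the maximum Steiner distance over `k`-subsets. -/
noncomputable def steinerDiam {V : Type*} [Fintype V] [DecidableEq V]
    (G : SimpleGraph V) (k : ℕ) : ℕ :=
  Finset.sup (Finset.univ.filter fun S : Finset V => S.card = k) (steinerDist G)

/-- The Steiner `(k,k')`-eccentricity of a `k'`-subset `S'`. -/
noncomputable def steinerEcc {V : Type*} [Fintype V] [DecidableEq V]
    (G : SimpleGraph V) (k : ℕ) (S' : Finset V) : ℕ :=
  Finset.sup (Finset.univ.filter fun S : Finset V => S.card = k ∧ S' ⊆ S) (steinerDist G)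

/-- The Steiner `(k,k')`-radius of `G`. -/
noncomputable def steinerRadius {V : Type*} [Fintype V] [DecidableEq V]
    (G : SimpleGraph V) (k k' : ℕ) : ℕ :=
  sInf {n | ∃ S' : Finset V, S'.card = k' ∧ steinerEcc G k S' = n}

/-- The diameter of `G`: the maximum distance between two vertices. -/
noncomputable def gDiam {V : Type*} [Fintype V] (G : SimpleGraph V) : ℕ :=
  Finset.sup Finset.univ (fun p : V × V => G.dist p.1 p.2)

/-- The number of pendant vertices (leaves) of `G`. -/
noncomputable def leafCount {V : Type*} [Fintype V] [DecidableEq V]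
    (G : SimpleGraph V) [DecidableRel G.Adj] : ℕ :=
  (Finset.univ.filter fun v => G.degree v = 1).card

theorem stmt5 {V : Type*} [Fintype V] [DecidableEq V] (G : SimpleGraph V)
    (hG : G.Connected) (n k : ℕ) (hn : Fintype.card V = n) (hk : 2 ≤ k) (hkn : k ≤ n) :
    ∀ k', 1 ≤ k' → k' < k →
      steinerRadius G k (k' + 1) ≤ steinerRadius G k k' := by
  intro k' hk1 hk'k
  have hk'n : k' ≤ Fintype.card V := by omega
  have hne : {m | ∃ S' : Finset V, S'.card = k' ∧ steinerEcc G k S' = m}.Nonempty := by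
    obtain ⟨S', _, hS'⟩ := Finset.exists_subset_card_eq (s := (Finset.univ : Finset V))
      (by simpa using hk'n)
    exact ⟨_, S', hS', rfl⟩
  have hmem := Nat.sInf_mem hne
  obtain ⟨S', hcard, hecc⟩ := hmem
  -- extend S' to a (k'+1)-set
  obtain ⟨T, hST, _, hTcard⟩ := Finset.exists_subsuperset_card_eq (Finset.subset_univ S')
    (Nat.le_add_left _ 1) (by rw [hcard, Finset.card_univ]; omega)
  rw [hcard] at hTcard
  have hle : steinerEcc G k T ≤ steinerEcc G k S' := by
    apply Finset.sup_mono
    intro S hS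
    simp only [Finset.mem_filter, Finset.mem_univ, true_and] at hS ⊢
    exact ⟨hS.1, hST.trans hS.2⟩
  calc steinerRadius G k (k' + 1) ≤ steinerEcc G k T :=
        Nat.sInf_le ⟨T, by omega, rfl⟩
    _ ≤ steinerEcc G k S' := hle
    _ = steinerRadius G k k' := hecc
end

section
/- Let k ≥ 2 and let T be a tree with exactly k pendant vertices. Then Sd_k(T) ≤ d + (k − 2)·⌊d/2⌋, where d = diam(T) is the diameter of T. -/
open SimpleGraph

/-!
Taking the whole tree as the connecting subgraph gives `Sd_k(T) ≤ |V| - 1`, so it suffices to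
count vertices. The ends `a`, `b` of a diametral path `q` are leaves, and every vertex off `q` lies
on the path from `a` to one of the other `k - 2` leaves `ℓ`. That path leaves `q` for good at some
vertex `m`; the branch from `m` to `ℓ` prolongs either half of `q` to a path of length at most
`d`, so it has at most `⌊d/2⌋` vertices besides `m`. Hence `|V| ≤ d + 1 + (k - 2)⌊d/2⌋`.
-/

namespace SimpleGraph

variable {V : Type*} {G : SimpleGraph V}

lemma IsAcyclic.length_eq_dist (hG : G.IsAcyclic) {u v : V} {p : G.Walk u v} (hp : p.IsPath) :
    p.length = G.dist u v := by
  obtain ⟨q, hq, hql⟩ := (Reachable.exists_path_of_dist ⟨p⟩)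
  rw [← hql, Subtype.mk.inj ((hG.subsingleton_path u v).elim ⟨p, hp⟩ ⟨q, hq⟩)]

lemma Walk.IsPath.append {u v w : V} {p : G.Walk u v} {q : G.Walk v w} (hp : p.IsPath)
    (hq : q.IsPath) (h : ∀ x ∈ p.support, x ∈ q.support → x = v) : (p.append q).IsPath := by
  have hq' := hq.support_nodup
  rw [← q.cons_tail_support, List.nodup_cons] at hq'
  rw [Walk.isPath_def, Walk.support_append]
  refine hp.support_nodup.append hq'.2 fun x hxp hxq => ?_
  obtain rfl := h x hxp (List.mem_of_mem_tail hxq)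
  exact hq'.1 hxq

lemma Walk.exists_eq_append_of_mem_first {u v : V} (p : G.Walk u v) {s : Set V} (hv : v ∈ s) :
    ∃ (m : V) (p₁ : G.Walk u m) (p₂ : G.Walk m v),
      p = p₁.append p₂ ∧ m ∈ s ∧ ∀ x ∈ p₁.support, x ∈ s → x = m := by
  induction p with
  | nil => exact ⟨_, .nil, .nil, rfl, hv, by simp⟩
  | @cons u _ _ h p ih =>
    by_cases hu : u ∈ s
    · exact ⟨u, .nil, .cons h p, rfl, hu, by simp⟩
    · obtain ⟨m, p₁, p₂, rfl, hm, hfirst⟩ := ih hv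
      refine ⟨m, .cons h p₁, p₂, rfl, hm, ?_⟩
      intro x hx hxs
      rw [Walk.support_cons, List.mem_cons] at hx
      rcases hx with rfl | hx
      · exact absurd hxs hu
      · exact hfirst x hx hxs

lemma IsAcyclic.eq_of_adj_of_dist_lt (hG : G.IsAcyclic) {x y w₁ w₂ : V} (hxy : G.Reachable x y)
    (h₁ : G.Adj y w₁) (h₂ : G.Adj y w₂) (hd₁ : G.dist x w₁ < G.dist x y)
    (hd₂ : G.dist x w₂ < G.dist x y) : w₁ = w₂ := by
  classical
  obtain ⟨p, hp, -⟩ := hxy.exists_path_of_dist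
  -- a neighbour of `y` closer to `x` is on the path from `x` to `y`, hence its penultimate vertex
  have key : ∀ w, G.Adj y w → G.dist x w < G.dist x y → w = p.penultimate := by
    intro w hw hdw
    obtain ⟨q, hq, hql⟩ := (hxy.trans hw.reachable).exists_path_of_dist
    have hyq : y ∉ q.support := fun hy => by
      have := (G.dist_le (q.takeUntil y hy)).trans (q.length_takeUntil_le_length hy)
      omega
    exact hG.eq_penultimate_of_adj_end hp hw
      (hG.mem_support_of_ne_mem_support_of_adj_of_isPath hp hq hw hyq)
  rw [key w₁ h₁ hd₁, key w₂ h₂ hd₂]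

lemma IsTree.exists_adj_dist_eq_add_one [Nontrivial V] [G.LocallyFinite] (hG : G.IsTree) (x : V)
    {y : V} (hy : G.degree y ≠ 1) : ∃ w, G.Adj y w ∧ G.dist x w = G.dist x y + 1 := by
  have hpos := hG.connected.preconnected.degree_pos_of_nontrivial y
  by_cases hxy : x = y
  · subst hxy
    obtain ⟨w, hw⟩ := (G.degree_pos_iff_exists_adj x).mp hpos
    exact ⟨w, hw, by rw [dist_self, dist_eq_one_iff_adj.mpr hw]⟩
  obtain ⟨w₁, h₁, w₂, h₂, hne⟩ := Finset.one_lt_card.mp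
    (show 1 < (G.neighborFinset y).card by rw [card_neighborFinset_eq_degree]; omega)
  rw [mem_neighborFinset] at h₁ h₂
  by_contra! hfar
  have hcloser : ∀ w, G.Adj y w → G.dist x w < G.dist x y := fun w hw => by
    have := hG.dist_eq_dist_add_one_of_adj x hw
    have := hfar w hw
    omega
  exact hne (hG.isAcyclic.eq_of_adj_of_dist_lt (hG.connected x y) h₁ h₂
    (hcloser w₁ h₁) (hcloser w₂ h₂))

lemma IsTree.degree_eq_one_of_forall_dist_le [G.LocallyFinite] (hG : G.IsTree) {x y : V}
    (hxy : x ≠ y) (hmax : ∀ w, G.dist x w ≤ G.dist x y) : G.degree y = 1 := by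
  have : Nontrivial V := ⟨x, y, hxy⟩
  by_contra hy
  obtain ⟨w, -, hw⟩ := hG.exists_adj_dist_eq_add_one x hy
  have := hmax w
  omega

lemma IsTree.exists_degree_eq_one_mem_support [Finite V] [Nontrivial V] [G.LocallyFinite]
    (hG : G.IsTree) (a v : V) :
    ∃ ℓ, G.degree ℓ = 1 ∧ ∃ p : G.Walk a ℓ, p.IsPath ∧ v ∈ p.support := by
  classical
  -- the farthest endpoint from `a` of a path from `a` through `v` is a leaf
  let S := {ℓ | ∃ p : G.Walk a ℓ, p.IsPath ∧ v ∈ p.support}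
  have hS : S.Nonempty := by
    obtain ⟨p, hp, -⟩ := (hG.connected a v).exists_path_of_dist
    exact ⟨v, p, hp, p.end_mem_support⟩
  obtain ⟨ℓ, ⟨p, hp, hvp⟩, hmax⟩ := S.exists_max_image (G.dist a) S.toFinite hS
  refine ⟨ℓ, by_contra fun hℓ => ?_, p, hp, hvp⟩
  obtain ⟨w, hw, hdw⟩ := hG.exists_adj_dist_eq_add_one a hℓ
  have hwp : w ∉ p.support := fun h => by
    have := (G.dist_le (p.takeUntil w h)).trans (p.length_takeUntil_le_length h)
    rw [hG.isAcyclic.length_eq_dist hp] at this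
    omega
  have := hmax w ⟨p.concat hw, hp.concat hwp hw, p.support_subset_support_concat hw hvp⟩
  omega

lemma IsAcyclic.card_support_sdiff_le [DecidableEq V] (hG : G.IsAcyclic) {d : ℕ}
    (hd : ∀ u v, G.dist u v ≤ d) {a b ℓ : V} {q : G.Walk a b} (hq : q.IsPath)
    (hqd : q.length = d) {p : G.Walk a ℓ} (hp : p.IsPath) :
    (p.support.toFinset \ q.support.toFinset).card ≤ d / 2 := by
  obtain ⟨m, r₁, r₂, hpr, hmq, hfirst⟩ :=
    p.reverse.exists_eq_append_of_mem_first (s := {x | x ∈ q.support}) q.start_mem_support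
  have hmq : m ∈ q.support := hmq
  have hr : (r₁.append r₂).IsPath := hpr ▸ hp.reverse
  have hr₂ : r₂ = (q.takeUntil m hmq).reverse := Subtype.mk.inj <|
    (hG.subsingleton_path m a).elim ⟨r₂, hr.of_append_right⟩ ⟨_, (hq.takeUntil hmq).reverse⟩
  have hbranch : ((q.dropUntil m hmq).reverse.append r₁.reverse).IsPath := by
    refine (hq.dropUntil hmq).reverse.append hr.of_append_left.reverse fun x hx hx' => ?_
    rw [Walk.support_reverse, List.mem_reverse] at hx hx'
    exact hfirst x hx' (q.support_dropUntil_subset_support hmq hx)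
  have hℓa : r₁.length + (q.takeUntil m hmq).length ≤ d := by
    have := hG.length_eq_dist hp ▸ hd a ℓ
    rwa [← p.length_reverse, hpr, Walk.length_append, hr₂, Walk.length_reverse] at this
  have hℓb : (q.dropUntil m hmq).length + r₁.length ≤ d := by
    have := hG.length_eq_dist hbranch ▸ hd b ℓ
    rwa [Walk.length_append, Walk.length_reverse, Walk.length_reverse] at this
  have hqm : (q.takeUntil m hmq).length + (q.dropUntil m hmq).length = d := by
    rw [← Walk.length_append, q.take_spec hmq, hqd]
  have hsub : p.support.toFinset \ q.support.toFinset ⊆ r₁.support.toFinset.erase m := by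
    intro x hx
    simp only [Finset.mem_sdiff, List.mem_toFinset] at hx
    have hxp : x ∈ p.reverse.support := by simpa using hx.1
    rw [hpr, Walk.mem_support_append_iff, hr₂, Walk.support_reverse, List.mem_reverse] at hxp
    refine Finset.mem_erase.mpr ⟨fun hxm => hx.2 (hxm ▸ hmq), List.mem_toFinset.mpr ?_⟩
    exact hxp.resolve_right fun h => hx.2 (q.support_takeUntil_subset_support hmq h)
  calc (p.support.toFinset \ q.support.toFinset).card
      ≤ (r₁.support.toFinset.erase m).card := Finset.card_le_card hsub
    _ = r₁.support.toFinset.card - 1 :=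
      Finset.card_erase_of_mem (List.mem_toFinset.mpr r₁.end_mem_support)
    _ ≤ r₁.support.length - 1 := Nat.sub_le_sub_right (List.toFinset_card_le _) 1
    _ ≤ d / 2 := by rw [Walk.length_support]; omega

lemma dist_le_gDiam [Fintype V] (u v : V) : G.dist u v ≤ gDiam G :=
  Finset.le_sup (f := fun p : V × V => G.dist p.1 p.2) (Finset.mem_univ (u, v))

lemma exists_dist_eq_gDiam [Fintype V] [Nonempty V] : ∃ a b : V, G.dist a b = gDiam G := by
  obtain ⟨⟨a, b⟩, -, hab⟩ := Finset.exists_mem_eq_sup Finset.univ Finset.univ_nonempty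
    (fun p : V × V => G.dist p.1 p.2)
  exact ⟨a, b, hab.symm⟩

lemma IsTree.exists_degree_eq_one_dist_eq_gDiam [Fintype V] [Nontrivial V] [G.LocallyFinite]
    (hG : G.IsTree) :
    ∃ a b : V, a ≠ b ∧ G.degree a = 1 ∧ G.degree b = 1 ∧ G.dist a b = gDiam G := by
  obtain ⟨a, b, hab⟩ := G.exists_dist_eq_gDiam
  have hne : a ≠ b := by
    obtain ⟨x, y, hxy⟩ := exists_pair_ne V
    have := hG.connected.pos_dist_of_ne hxy
    have := G.dist_le_gDiam x y
    rintro rfl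
    rw [dist_self] at hab
    omega
  refine ⟨a, b, hne, hG.degree_eq_one_of_forall_dist_le hne.symm fun w => ?_,
    hG.degree_eq_one_of_forall_dist_le hne fun w => ?_, hab⟩
  · rw [dist_comm (u := b) (v := a), hab]
    exact G.dist_le_gDiam _ _
  · rw [hab]
    exact G.dist_le_gDiam _ _

lemma IsTree.exists_degree_eq_one_mem_support_of_notMem [Finite V] [Nontrivial V]
    [G.LocallyFinite] (hG : G.IsTree) {a b v : V} {q : G.Walk a b} (hq : q.IsPath)
    (hv : v ∉ q.support) (P : ∀ ℓ, G.Walk a ℓ) (hP : ∀ ℓ, (P ℓ).IsPath) :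
    ∃ ℓ, G.degree ℓ = 1 ∧ ℓ ≠ a ∧ ℓ ≠ b ∧ v ∈ (P ℓ).support := by
  obtain ⟨ℓ, hℓ, p, hp, hvp⟩ := hG.exists_degree_eq_one_mem_support a v
  obtain rfl : p = P ℓ :=
    Subtype.mk.inj <| (hG.isAcyclic.subsingleton_path a ℓ).elim ⟨p, hp⟩ ⟨_, hP ℓ⟩
  refine ⟨ℓ, hℓ, ?_, ?_, hvp⟩
  · rintro rfl
    obtain rfl : v = ℓ := by simpa [(Walk.isPath_iff_nil.mp hp).eq_nil] using hvp
    exact hv q.start_mem_support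
  · rintro rfl
    exact hv (Subtype.mk.inj ((hG.isAcyclic.subsingleton_path a ℓ).elim ⟨_, hp⟩ ⟨q, hq⟩) ▸ hvp)

theorem IsTree.card_le_gDiam_add_leafCount_mul [Fintype V] [DecidableEq V] [DecidableRel G.Adj]
    (hG : G.IsTree) : Fintype.card V ≤ gDiam G + 1 + (leafCount G - 2) * (gDiam G / 2) := by
  rcases subsingleton_or_nontrivial V with hV | hV
  · have := Fintype.card_le_one_iff_subsingleton.mpr hV
    omega
  set d := gDiam G
  obtain ⟨a, b, hne, ha, hb, hab⟩ := hG.exists_degree_eq_one_dist_eq_gDiam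
  obtain ⟨q, hq, hqd⟩ := (hG.connected a b).exists_path_of_dist
  choose P hP using fun ℓ => (hG.existsUnique_path a ℓ).exists
  set L := (Finset.univ.filter (G.degree · = 1)).erase a |>.erase b
  have hL : L.card = leafCount G - 2 := by
    rw [Finset.card_erase_of_mem (by simp [hne.symm, hb]), Finset.card_erase_of_mem (by simp [ha])]
    rfl
  have hcover : (Finset.univ : Finset V) ⊆
      q.support.toFinset ∪ L.biUnion fun ℓ => (P ℓ).support.toFinset \ q.support.toFinset := by
    intro v _
    by_cases hvq : v ∈ q.support
    · exact Finset.mem_union_left _ (List.mem_toFinset.mpr hvq)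
    obtain ⟨ℓ, hℓ, hℓa, hℓb, hvP⟩ :=
      hG.exists_degree_eq_one_mem_support_of_notMem hq hvq P hP
    exact Finset.mem_union_right _
      (Finset.mem_biUnion.mpr ⟨ℓ, by simp [L, hℓa, hℓb, hℓ], by simp [hvP, hvq]⟩)
  calc Fintype.card V
      ≤ _ := Finset.card_le_card hcover
    _ ≤ q.support.toFinset.card + ∑ ℓ ∈ L, ((P ℓ).support.toFinset \ q.support.toFinset).card :=
        (Finset.card_union_le _ _).trans (Nat.add_le_add_left Finset.card_biUnion_le _)
    _ ≤ (d + 1) + L.card * (d / 2) := by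
        gcongr
        · exact (List.toFinset_card_le _).trans (by rw [Walk.length_support, hqd, hab])
        · exact Finset.sum_le_card_nsmul _ _ _ fun ℓ _ =>
            hG.isAcyclic.card_support_sdiff_le G.dist_le_gDiam hq (hqd.trans hab) (hP ℓ)
    _ = d + 1 + (leafCount G - 2) * (d / 2) := by rw [hL]

lemma steinerDist_le_ncard_edgeSet (hG : G.Connected) (S : Finset V) :
    steinerDist G S ≤ G.edgeSet.ncard :=
  Nat.sInf_le ⟨⊤, Subgraph.connected_iff'.mpr (Subgraph.topIso.connected_iff.mpr hG),
    by simp, by rw [Subgraph.edgeSet_top]⟩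

lemma steinerDiam_le_ncard_edgeSet [Fintype V] [DecidableEq V] (hG : G.Connected) (k : ℕ) :
    steinerDiam G k ≤ G.edgeSet.ncard :=
  Finset.sup_le fun S _ => steinerDist_le_ncard_edgeSet hG S

lemma IsTree.ncard_edgeSet_add_one [Fintype V] (hG : G.IsTree) :
    G.edgeSet.ncard + 1 = Fintype.card V := by
  classical
  rw [← coe_edgeFinset, Set.ncard_coe_finset, hG.card_edgeFinset]

end SimpleGraph

theorem stmt6_general {V : Type*} [Fintype V] [DecidableEq V] (G : SimpleGraph V)
    [DecidableRel G.Adj] (hT : G.IsTree) (k : ℕ)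
    (hleaves : leafCount G = k) :
    steinerDiam G k ≤ gDiam G + (k - 2) * (gDiam G / 2) := by
  have hdiam := steinerDiam_le_ncard_edgeSet hT.connected k
  have hedges := hT.ncard_edgeSet_add_one
  have hcard := hT.card_le_gDiam_add_leafCount_mul
  rw [hleaves] at hcard
  omega

theorem stmt6 {V : Type*} [Fintype V] [DecidableEq V] (G : SimpleGraph V)
    [DecidableRel G.Adj] (hT : G.IsTree) (k : ℕ) (hk : 2 ≤ k)
    (hleaves : leafCount G = k) :
    steinerDiam G k ≤ gDiam G + (k - 2) * (gDiam G / 2) :=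
  stmt6_general G hT k hleaves
end

section
/- For a complete r-partite graph K_{n_1,…,n_r} with n_1 ≤ ⋯ ≤ n_r of order at least k ≥ 2: Sd_k(K_{n_1,…,n_r}) = k if n_r ≥ k, and Sd_k(K_{n_1,…,n_r}) = k − 1 if n_r ≤ k − 1. -/
open SimpleGraph

/-! A connected subgraph containing `S` has at least `|S| - 1` edges, and at least `|S|` when `S`
is independent, since it then needs a vertex outside `S`. Conversely, a spanning tree of a
connected induced subgraph on `T ⊇ S` has `|T| - 1` edges. In a complete multipartite graph a
set meeting two parts induces a connected subgraph, so its Steiner distance is `|S| - 1`; a set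
inside one part is independent and becomes connected once a vertex of another part is added, so
its Steiner distance is `|S|`. A `k`-set inside a single part exists exactly when the largest part
has at least `k` vertices. -/

namespace SimpleGraph

variable {V : Type*} {G : SimpleGraph V}

lemma Subgraph.Connected.ncard_verts_le_ncard_edgeSet_add_one {H : G.Subgraph}
    (hH : H.Connected) : H.verts.ncard ≤ H.edgeSet.ncard + 1 := by
  rw [← H.image_coe_edgeSet_coe,
    Set.ncard_image_of_injective _ (Sym2.map.injective Subtype.val_injective)]
  exact hH.coe.card_vert_le_card_edgeSet_add_one

lemma Subgraph.Connected.exists_ncard_edgeSet_add_one_eq {K : G.Subgraph} (hK : K.Connected)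
    (hfin : K.verts.Finite) :
    ∃ H : G.Subgraph, H.Connected ∧ H.verts = K.verts ∧ H.edgeSet.ncard + 1 = K.verts.ncard := by
  have : Finite K.verts := hfin
  obtain ⟨F, hF, hFtree⟩ := hK.coe.exists_isTree_le
  refine ⟨Subgraph.coeSubgraph (toSubgraph F hF), (hFtree.connected.toSubgraph hF).coeSubgraph,
    by simp, ?_⟩
  rw [Subgraph.edgeSet_map, Set.ncard_image_of_injective _ (Sym2.map.injective K.hom_injective)]
  exact (isTree_iff_connected_and_card.1 hFtree).2

lemma Connected.exists_subgraph_ncard_edgeSet_add_one_eq {T : Finset V}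
    (hT : (G.induce ↑T).Connected) :
    ∃ H : G.Subgraph, H.Connected ∧ H.verts = ↑T ∧ H.edgeSet.ncard + 1 = T.card := by
  have hK : ((⊤ : G.Subgraph).induce ↑T).Connected := by
    rwa [Subgraph.connected_iff', ← induce_eq_coe_induce_top]
  simpa using hK.exists_ncard_edgeSet_add_one_eq T.finite_toSet

end SimpleGraph

section steinerDist

variable {V : Type*} {G : SimpleGraph V} {S : Finset V}

lemma steinerDist_le {H : G.Subgraph} (hH : H.Connected) (hS : ↑S ⊆ H.verts) :
    steinerDist G S ≤ H.edgeSet.ncard :=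
  Nat.sInf_le ⟨H, hH, hS, rfl⟩

lemma le_steinerDist {m : ℕ} (hne : ∃ H : G.Subgraph, H.Connected ∧ ↑S ⊆ H.verts)
    (h : ∀ H : G.Subgraph, H.Connected → ↑S ⊆ H.verts → m ≤ H.edgeSet.ncard) :
    m ≤ steinerDist G S := by
  obtain ⟨H, hH, hS⟩ := hne
  refine le_csInf ⟨_, H, hH, hS, rfl⟩ ?_
  rintro _ ⟨H', hH', hS', rfl⟩
  exact h H' hH' hS'

lemma exists_connected_subgraph_of_connected_induce {T : Finset V}
    (hT : (G.induce ↑T).Connected) (hST : S ⊆ T) :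
    ∃ H : G.Subgraph, H.Connected ∧ ↑S ⊆ H.verts := by
  obtain ⟨H, hH, hverts, -⟩ := hT.exists_subgraph_ncard_edgeSet_add_one_eq
  exact ⟨H, hH, hverts ▸ Finset.coe_subset.2 hST⟩

lemma steinerDist_add_one_le {T : Finset V} (hT : (G.induce ↑T).Connected) (hST : S ⊆ T) :
    steinerDist G S + 1 ≤ T.card := by
  obtain ⟨H, hH, hverts, hcard⟩ := hT.exists_subgraph_ncard_edgeSet_add_one_eq
  have := steinerDist_le (S := S) hH (hverts ▸ Finset.coe_subset.2 hST)
  omega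

lemma card_le_steinerDist_add_one [Finite V]
    (hne : ∃ H : G.Subgraph, H.Connected ∧ ↑S ⊆ H.verts) : S.card ≤ steinerDist G S + 1 := by
  suffices S.card - 1 ≤ steinerDist G S by omega
  refine le_steinerDist hne fun H hH hSH => ?_
  have := Set.ncard_le_ncard hSH
  have := hH.ncard_verts_le_ncard_edgeSet_add_one
  rw [Set.ncard_coe_finset] at *
  omega

lemma card_le_steinerDist_of_isIndepSet [Finite V]
    (hne : ∃ H : G.Subgraph, H.Connected ∧ ↑S ⊆ H.verts) (hS : G.IsIndepSet ↑S)
    (hS2 : 2 ≤ S.card) : S.card ≤ steinerDist G S := by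
  refine le_steinerDist hne fun H hH hSH => ?_
  -- A connected graph on the independent set `S` alone would have no edges.
  have hstrict : ↑S ⊂ H.verts := by
    refine hSH.ssubset_of_ne fun hSeq => ?_
    have hempty : H.edgeSet = ∅ := by
      refine Set.eq_empty_of_forall_notMem fun e he => ?_
      induction e with
      | _ a b =>
        have hab : H.Adj a b := he
        exact hS (hSeq ▸ H.edge_vert hab) (hSeq ▸ H.edge_vert hab.symm) hab.ne (H.adj_sub hab)
    have := hH.ncard_verts_le_ncard_edgeSet_add_one
    rw [← hSeq, hempty, Set.ncard_coe_finset, Set.ncard_empty] at this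
    omega
  have := Set.ncard_lt_ncard hstrict
  have := hH.ncard_verts_le_ncard_edgeSet_add_one
  rw [Set.ncard_coe_finset] at *
  omega

lemma steinerDist_eq_card_sub_one [Finite V] (hS : (G.induce ↑S).Connected) :
    steinerDist G S = S.card - 1 := by
  have := steinerDist_add_one_le hS subset_rfl
  have := card_le_steinerDist_add_one (exists_connected_subgraph_of_connected_induce hS subset_rfl)
  omega

lemma steinerDist_eq_card_of_isIndepSet [Finite V] [DecidableEq V] {w : V}
    (hS : G.IsIndepSet ↑S) (hS2 : 2 ≤ S.card) (hw : (G.induce ↑(insert w S)).Connected) :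
    steinerDist G S = S.card := by
  have hST := Finset.subset_insert w S
  have := steinerDist_add_one_le hw hST
  have := Finset.card_insert_le w S
  have := card_le_steinerDist_of_isIndepSet
    (exists_connected_subgraph_of_connected_induce hw hST) hS hS2
  omega

end steinerDist

lemma steinerDiam_eq {V : Type*} [Fintype V] [DecidableEq V] {G : SimpleGraph V} {k c : ℕ}
    (hle : ∀ S : Finset V, S.card = k → steinerDist G S ≤ c)
    (hex : ∃ S : Finset V, S.card = k ∧ steinerDist G S = c) : steinerDiam G k = c := by
  obtain ⟨S, hS, hc⟩ := hex
  refine le_antisymm (Finset.sup_le fun T hT => hle T (Finset.mem_filter.1 hT).2) ?_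
  exact hc ▸ Finset.le_sup (Finset.mem_filter.2 ⟨Finset.mem_univ S, hS⟩)

section completeMultipartite

variable {ι : Type*} {V : ι → Type*} {S : Finset (Σ i, V i)}

lemma completeMultipartiteGraph.connected_induce_of_fst_ne {T : Set (Σ i, V i)}
    {u v : Σ i, V i} (hu : u ∈ T) (hv : v ∈ T) (huv : u.1 ≠ v.1) :
    ((completeMultipartiteGraph V).induce T).Connected := by
  rw [connected_iff_exists_forall_reachable]
  refine ⟨⟨u, hu⟩, fun x => ?_⟩
  by_cases hux : u.1 = x.1.1
  · have huv' : (completeMultipartiteGraph V).induce T |>.Adj ⟨u, hu⟩ ⟨v, hv⟩ := huv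
    have hvx : (completeMultipartiteGraph V).induce T |>.Adj ⟨v, hv⟩ x :=
      fun hvx => huv (hux.trans hvx.symm)
    exact huv'.reachable.trans hvx.reachable
  · exact Adj.reachable hux

lemma completeMultipartiteGraph.isIndepSet_of_forall_fst_eq {i : ι}
    (hS : ∀ x ∈ S, x.1 = i) : (completeMultipartiteGraph V).IsIndepSet ↑S :=
  fun x hx y hy _ hxy => hxy ((hS x hx).trans (hS y hy).symm)

lemma steinerDist_completeMultipartiteGraph_of_fst_ne [Finite (Σ i, V i)] {u v : Σ i, V i}
    (hu : u ∈ S) (hv : v ∈ S) (huv : u.1 ≠ v.1) :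
    steinerDist (completeMultipartiteGraph V) S = S.card - 1 :=
  steinerDist_eq_card_sub_one (completeMultipartiteGraph.connected_induce_of_fst_ne hu hv huv)

lemma steinerDist_completeMultipartiteGraph_of_forall_fst_eq [Finite (Σ i, V i)]
    [Nontrivial ι] [∀ i, Nonempty (V i)] {i : ι} (hS : ∀ x ∈ S, x.1 = i) (hS2 : 2 ≤ S.card) :
    steinerDist (completeMultipartiteGraph V) S = S.card := by
  classical
  obtain ⟨j, hji⟩ := exists_ne i
  obtain ⟨x, hx⟩ : S.Nonempty := Finset.card_pos.1 (by omega)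
  let w : Σ i, V i := ⟨j, Classical.arbitrary _⟩
  refine steinerDist_eq_card_of_isIndepSet (w := w)
    (completeMultipartiteGraph.isIndepSet_of_forall_fst_eq hS) hS2 ?_
  refine completeMultipartiteGraph.connected_induce_of_fst_ne (u := w) (v := x) ?_ ?_ ?_
  · simp
  · simp [hx]
  · exact (hS x hx).symm ▸ hji

lemma Finset.card_le_card_of_forall_fst_eq [∀ i, Fintype (V i)] {i : ι} (hS : ∀ x ∈ S, x.1 = i) :
    S.card ≤ Fintype.card (V i) := by
  refine Finset.card_le_card_of_surjOn (Sigma.mk i) fun x hx => ?_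
  obtain ⟨j, y⟩ := x
  obtain rfl : j = i := hS _ hx
  exact ⟨y, Finset.mem_coe.2 (Finset.mem_univ y), rfl⟩

lemma steinerDist_completeMultipartiteGraph_le_card [Finite (Σ i, V i)] [Nontrivial ι]
    [∀ i, Nonempty (V i)] (hS2 : 2 ≤ S.card) :
    steinerDist (completeMultipartiteGraph V) S ≤ S.card := by
  obtain ⟨x, hx⟩ : S.Nonempty := Finset.card_pos.1 (by omega)
  by_cases hpart : ∀ y ∈ S, y.1 = x.1
  · exact (steinerDist_completeMultipartiteGraph_of_forall_fst_eq hpart hS2).le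
  · push Not at hpart
    obtain ⟨y, hy, hyx⟩ := hpart
    rw [steinerDist_completeMultipartiteGraph_of_fst_ne hx hy hyx.symm]
    omega

lemma steinerDist_completeMultipartiteGraph_of_card_lt [∀ i, Fintype (V i)] [Finite ι]
    (hne : S.Nonempty) (hcard : ∀ i, Fintype.card (V i) < S.card) :
    steinerDist (completeMultipartiteGraph V) S = S.card - 1 := by
  obtain ⟨x, hx⟩ := hne
  have hpart : ¬ ∀ y ∈ S, y.1 = x.1 := fun h =>
    (Finset.card_le_card_of_forall_fst_eq h).not_gt (hcard _)
  push Not at hpart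
  obtain ⟨y, hy, hyx⟩ := hpart
  exact steinerDist_completeMultipartiteGraph_of_fst_ne hx hy hyx.symm

end completeMultipartite

theorem stmt9 (r k : ℕ) (hr : 2 ≤ r) (n : Fin r → ℕ) (hmono : Monotone n)
    (hpos : ∀ i, 0 < n i) (hk : 2 ≤ k) (horder : k ≤ ∑ i, n i) :
    (k ≤ n ⟨r - 1, by omega⟩ →
      steinerDiam (completeMultipartiteGraph (fun i : Fin r => Fin (n i))) k = k) ∧
    (n ⟨r - 1, by omega⟩ ≤ k - 1 →
      steinerDiam (completeMultipartiteGraph (fun i : Fin r => Fin (n i))) k = k - 1) := by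
  have : Nontrivial (Fin r) := Fin.nontrivial_iff_two_le.2 hr
  have : ∀ i, Nonempty (Fin (n i)) := fun i => ⟨⟨0, hpos i⟩⟩
  set p : Fin r := ⟨r - 1, by omega⟩
  refine ⟨fun hkp => ?_, fun hpk => ?_⟩
  · obtain ⟨S, hSp, hS⟩ := Finset.exists_subset_card_eq
      (s := Finset.univ.map (Function.Embedding.sigmaMk (β := fun i => Fin (n i)) p))
      (by simpa using hkp)
    have hSpart : ∀ x ∈ S, x.1 = p := fun x hx => by
      obtain ⟨y, -, rfl⟩ := Finset.mem_map.1 (hSp hx)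
      rfl
    exact steinerDiam_eq (fun T hT => hT ▸ steinerDist_completeMultipartiteGraph_le_card (by omega))
      ⟨S, hS, hS ▸ steinerDist_completeMultipartiteGraph_of_forall_fst_eq hSpart (by omega)⟩
  · have hdist (S : Finset (Σ i : Fin r, Fin (n i))) (hS : S.card = k) :
        steinerDist (completeMultipartiteGraph _) S = k - 1 := by
      refine hS ▸ steinerDist_completeMultipartiteGraph_of_card_lt (Finset.card_pos.1 (by omega))
        fun i => ?_
      have : n i ≤ n p := hmono (Nat.le_sub_one_of_lt i.2)
      simp only [Fintype.card_fin]
      omega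
    obtain ⟨S, -, hS⟩ := Finset.exists_subset_card_eq
      (s := (Finset.univ : Finset (Σ i : Fin r, Fin (n i)))) (by simpa using horder)
    exact steinerDiam_eq (fun T hT => (hdist T hT).le) ⟨S, hS, hdist S hS⟩
end

section
/- For the path P_n on n vertices and integers n ≥ k ≥ 2 and 1 ≤ k' ≤ k with k − k' ≥ 2, the Steiner (k,k')-radius satisfies Sr_{k,k'}(P_n) = n − 1. -/
open SimpleGraph

/-!
A connected graph on `N` vertices has a spanning tree, which witnesses that every vertex set has
Steiner distance at most `N - 1`. Conversely, a connected subgraph containing `u` and `v` contains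
a `u`–`v` path, so it has at least `dist u v` edges. The two ends of `P_n` are at distance `n - 1`,
and since `k ≥ k' + 2`, every `k'`-set extends to a `k`-set containing both ends; hence every
`k'`-set has Steiner `(k, k')`-eccentricity exactly `n - 1`.
-/

namespace SimpleGraph

variable {V : Type*} {G : SimpleGraph V}

theorem Subgraph.Connected.dist_le_ncard_edgeSet {H : G.Subgraph} (hH : H.Connected)
    (hfin : H.edgeSet.Finite) {u v : V} (hu : u ∈ H.verts) (hv : v ∈ H.verts) :
    G.dist u v ≤ H.edgeSet.ncard := by
  classical
  obtain ⟨p, hpH⟩ := H.preconnected_iff_forall_exists_walk_subgraph.mp hH.preconnected hu hv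
  have hq : p.bypass.IsPath := p.bypass_isPath
  have hedges : (↑p.bypass.edges.toFinset : Set (Sym2 V)) ⊆ H.edgeSet := fun e he =>
    Subgraph.edgeSet_mono hpH <| by
      simpa using p.edges_bypass_subset_edges (List.mem_toFinset.mp he)
  calc G.dist u v ≤ p.bypass.length := dist_le _
    _ = p.bypass.edges.toFinset.card := by
      rw [List.toFinset_card_of_nodup hq.isTrail.edges_nodup, Walk.length_edges]
    _ = (↑p.bypass.edges.toFinset : Set (Sym2 V)).ncard := (Set.ncard_coe_finset _).symm
    _ ≤ H.edgeSet.ncard := Set.ncard_le_ncard hedges hfin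

theorem Connected.exists_spanning_subgraph_ncard_edgeSet [Finite V] (hG : G.Connected) :
    ∃ H : G.Subgraph, H.Connected ∧ H.verts = Set.univ ∧ H.edgeSet.ncard = Nat.card V - 1 := by
  obtain ⟨T, hTG, hT⟩ := hG.exists_isTree_le
  refine ⟨toSubgraph T hTG, hT.connected.toSubgraph hTG, rfl, ?_⟩
  have hcard : T.edgeSet.ncard + 1 = Nat.card V := (isTree_iff_connected_and_card.mp hT).2
  change T.edgeSet.ncard = Nat.card V - 1
  omega

theorem Walk.val_le_val_add_length_of_pathGraph {n : ℕ} {u v : Fin n}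
    (w : (pathGraph n).Walk u v) : (v : ℕ) ≤ u + w.length := by
  induction w with
  | nil => simp
  | cons hadj _ ih =>
    rw [pathGraph_adj] at hadj
    rw [Walk.length_cons]
    omega

theorem le_dist_zero_last_pathGraph (m : ℕ) :
    m ≤ (pathGraph (m + 1)).dist 0 (Fin.last m) := by
  obtain ⟨w, hw⟩ := (pathGraph_connected m).exists_walk_length_eq_dist 0 (Fin.last m)
  simpa [hw] using w.val_le_val_add_length_of_pathGraph

end SimpleGraph

section Steiner

variable {V : Type*} {G : SimpleGraph V}

theorem steinerDist_le_card_sub_one [Finite V] (hG : G.Connected) (S : Finset V) :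
    steinerDist G S ≤ Nat.card V - 1 := by
  obtain ⟨H, hH, hverts, hcard⟩ := hG.exists_spanning_subgraph_ncard_edgeSet
  exact Nat.sInf_le ⟨H, hH, hverts ▸ Set.subset_univ _, hcard⟩

theorem dist_le_steinerDist [Finite V] (hG : G.Connected) {S : Finset V} {u v : V}
    (hu : u ∈ S) (hv : v ∈ S) : G.dist u v ≤ steinerDist G S := by
  obtain ⟨H, hH, hverts, -⟩ := hG.exists_spanning_subgraph_ncard_edgeSet
  refine le_csInf ⟨_, H, hH, hverts ▸ Set.subset_univ _, rfl⟩ ?_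
  rintro _ ⟨H', hH', hS, rfl⟩
  exact hH'.dist_le_ncard_edgeSet (Set.toFinite _) (hS hu) (hS hv)

theorem steinerEcc_eq_card_sub_one [Fintype V] [DecidableEq V] (hG : G.Connected)
    {u v : V} (huv : Nat.card V - 1 ≤ G.dist u v) {k : ℕ} {S' : Finset V}
    (hk : S'.card + 2 ≤ k) (hkV : k ≤ Nat.card V) :
    steinerEcc G k S' = Nat.card V - 1 := by
  refine le_antisymm (Finset.sup_le fun S _ => steinerDist_le_card_sub_one hG S) ?_
  have hcard : (insert u (insert v S')).card ≤ k := by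
    have := Finset.card_insert_le u (insert v S')
    have := Finset.card_insert_le v S'
    omega
  obtain ⟨S, hsub, -, hScard⟩ :=
    Finset.exists_subsuperset_card_eq (Finset.subset_univ _) hcard (by simpa using hkV)
  have hS : S ∈ Finset.univ.filter fun S : Finset V => S.card = k ∧ S' ⊆ S := by
    simp only [Finset.mem_filter, Finset.mem_univ, true_and]
    exact ⟨hScard, fun x hx => hsub (by simp [hx])⟩
  calc Nat.card V - 1 ≤ G.dist u v := huv
    _ ≤ steinerDist G S := dist_le_steinerDist hG (hsub (by simp)) (hsub (by simp))
    _ ≤ steinerEcc G k S' := Finset.le_sup hS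

theorem steinerRadius_eq_of_forall_steinerEcc_eq [Fintype V] [DecidableEq V] {k k' r : ℕ}
    (hk' : k' ≤ Nat.card V) (h : ∀ S' : Finset V, S'.card = k' → steinerEcc G k S' = r) :
    steinerRadius G k k' = r := by
  obtain ⟨S', -, hS'⟩ := Finset.exists_subset_card_eq (s := Finset.univ) (by simpa using hk')
  have hset : {n | ∃ S' : Finset V, S'.card = k' ∧ steinerEcc G k S' = n} = {r} := by
    ext n
    constructor
    · rintro ⟨T, hT, rfl⟩
      exact h T hT
    · rintro rfl
      exact ⟨S', hS', h S' hS'⟩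
  rw [steinerRadius, hset, csInf_singleton]

end Steiner

theorem stmt11_general (n k k' : ℕ) (hkn : k ≤ n)
    (hkk' : k' + 2 ≤ k) :
    steinerRadius (pathGraph n) k k' = n - 1 := by
  obtain ⟨m, rfl⟩ : ∃ m, n = m + 1 := ⟨n - 1, by omega⟩
  have hcard : Nat.card (Fin (m + 1)) = m + 1 := Nat.card_fin _
  refine steinerRadius_eq_of_forall_steinerEcc_eq (by omega) fun S' hS' => ?_
  have hecc := steinerEcc_eq_card_sub_one (pathGraph_connected m)
    (by rw [hcard]; exact le_dist_zero_last_pathGraph m) (hS' ▸ hkk') (by omega)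
  rwa [hcard] at hecc

theorem stmt11 (n k k' : ℕ) (hk : 2 ≤ k) (hkn : k ≤ n) (hk' : 1 ≤ k')
    (hkk' : k' + 2 ≤ k) :
    steinerRadius (pathGraph n) k k' = n - 1 :=
  stmt11_general n k k' hkn hkk'
end

section
/- For a complete r-partite graph G = K_{n_1,…,n_r} (r ≥ 2) of order at least k, with k ≥ k' ≥ 2, the Steiner (k,k')-radius satisfies Sr_{k,k'}(G) = k − 1. -/
/-!
A connected graph on `m` vertices has at least `m - 1` edges, so in a connected graph every
`k`-set has Steiner distance at least `k - 1`, and every `(k,k')`-eccentricity is at least `k - 1`.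
In a complete multipartite graph every vertex set meeting two parts induces a connected subgraph,
and a spanning tree of it has exactly `|S| - 1` edges. So a `k'`-set containing two vertices from
different parts (possible because `k' ≥ 2`) has eccentricity exactly `k - 1`.
-/

open SimpleGraph

namespace SimpleGraph

variable {V : Type*} {G : SimpleGraph V}

namespace Subgraph

theorem ncard_edgeSet_coe (H : G.Subgraph) : H.coe.edgeSet.ncard = H.edgeSet.ncard := by
  rw [← H.image_coe_edgeSet_coe,
    Set.ncard_image_of_injective _ (Sym2.map.injective Subtype.val_injective)]

theorem Connected.ncard_verts_le_ncard_edgeSet_add_one_s13 {H : G.Subgraph} (hH : H.Connected) :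
    H.verts.ncard ≤ H.edgeSet.ncard + 1 := by
  have := hH.coe.card_vert_le_card_edgeSet_add_one
  rwa [Nat.card_coe_set_eq, Nat.card_coe_set_eq, ncard_edgeSet_coe] at this

theorem Connected.exists_spanningTree {H : G.Subgraph} (hH : H.Connected) [Finite H.verts] :
    ∃ K : G.Subgraph,
      K.Connected ∧ K.verts = H.verts ∧ K.edgeSet.ncard + 1 = H.verts.ncard := by
  obtain ⟨T, hTH, hT⟩ := hH.coe.exists_isTree_le
  refine ⟨H.coeSubgraph (SimpleGraph.toSubgraph T hTH),
    (hT.connected.toSubgraph hTH).coeSubgraph _, ?_, ?_⟩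
  · simp
  · have hcard := (isTree_iff_connected_and_card.mp hT).2
    rw [Nat.card_coe_set_eq, Nat.card_coe_set_eq] at hcard
    rwa [edgeSet_map, Set.ncard_image_of_injective _ (Sym2.map.injective H.hom_injective)]

end Subgraph

theorem card_le_steinerDist_add_one [Finite V] (hG : G.Connected) (S : Finset V) :
    S.card ≤ steinerDist G S + 1 := by
  have hne :
      {m | ∃ H : G.Subgraph, H.Connected ∧ ↑S ⊆ H.verts ∧ H.edgeSet.ncard = m}.Nonempty :=
    ⟨_, ⊤, Subgraph.connected_iff'.mpr (Subgraph.topIso.connected_iff.mpr hG),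
      Set.subset_univ _, rfl⟩
  obtain ⟨H, hH, hSH, hedges⟩ := Nat.sInf_mem hne
  calc S.card = (S : Set V).ncard := (Set.ncard_coe_finset S).symm
    _ ≤ H.verts.ncard := Set.ncard_le_ncard hSH
    _ ≤ H.edgeSet.ncard + 1 := hH.ncard_verts_le_ncard_edgeSet_add_one_s13
    _ = steinerDist G S + 1 := by rw [hedges, steinerDist]

theorem steinerDist_le_card_sub_one {S : Finset V} (hS : (G.induce (S : Set V)).Connected) :
    steinerDist G S ≤ S.card - 1 := by
  have : Finite ((⊤ : G.Subgraph).induce (S : Set V)).verts := S.finite_toSet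
  obtain ⟨K, hK, hKverts, hKedges⟩ := (connected_induce_iff.mp hS).exists_spanningTree
  rw [Subgraph.induce_verts, Set.ncard_coe_finset] at hKedges
  rw [Subgraph.induce_verts] at hKverts
  have hdist : steinerDist G S ≤ K.edgeSet.ncard :=
    Nat.sInf_le ⟨K, hK, hKverts.symm.subset, rfl⟩
  omega

theorem connected_induce_completeMultipartiteGraph {ι : Type*} {β : ι → Type*}
    {s : Set (Σ i, β i)} {a b : Σ i, β i} (ha : a ∈ s) (hb : b ∈ s) (hab : a.1 ≠ b.1) :
    ((completeMultipartiteGraph β).induce s).Connected := by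
  refine (connected_iff_exists_forall_reachable _).mpr ⟨⟨a, ha⟩, fun x => ?_⟩
  by_cases hxa : x.1.1 = a.1
  · have hadj_ab : ((completeMultipartiteGraph β).induce s).Adj ⟨a, ha⟩ ⟨b, hb⟩ := hab
    have hadj_bx : ((completeMultipartiteGraph β).induce s).Adj ⟨b, hb⟩ x :=
      fun h => hab (hxa ▸ h).symm
    exact hadj_ab.reachable.trans hadj_bx.reachable
  · exact Adj.reachable (Ne.symm hxa)

section Fintype

variable [Fintype V] [DecidableEq V]

theorem steinerDist_le_steinerEcc {k : ℕ} {S S' : Finset V} (hS : S.card = k)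
    (hS'S : S' ⊆ S) :
    steinerDist G S ≤ steinerEcc G k S' :=
  Finset.le_sup (Finset.mem_filter.mpr ⟨Finset.mem_univ S, hS, hS'S⟩)

theorem steinerEcc_le {k m : ℕ} {S' : Finset V}
    (h : ∀ S : Finset V, S.card = k → S' ⊆ S → steinerDist G S ≤ m) :
    steinerEcc G k S' ≤ m :=
  Finset.sup_le fun S hS => h S (Finset.mem_filter.mp hS).2.1 (Finset.mem_filter.mp hS).2.2

theorem le_steinerEcc {k m : ℕ} {S' : Finset V} (hS' : S'.card ≤ k) (hk : k ≤ Fintype.card V)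
    (h : ∀ S : Finset V, S.card = k → m ≤ steinerDist G S) : m ≤ steinerEcc G k S' := by
  obtain ⟨S, hS'S, hS⟩ := Finset.exists_superset_card_eq hS' hk
  exact (h S hS).trans (steinerDist_le_steinerEcc hS hS'S)

theorem steinerRadius_eq_sub_one (hG : G.Connected) {k k' : ℕ} (hk'k : k' ≤ k)
    (hk : k ≤ Fintype.card V) (S₀ : Finset V) (hS₀ : S₀.card = k')
    (hS₀span : ∀ S : Finset V, S.card = k → S₀ ⊆ S → steinerDist G S ≤ k - 1) :
    steinerRadius G k k' = k - 1 := by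
  have hlower : ∀ S' : Finset V, S'.card = k' → k - 1 ≤ steinerEcc G k S' := fun S' hS' =>
    le_steinerEcc (hS' ▸ hk'k) hk fun S hS => by
      have := card_le_steinerDist_add_one hG S
      omega
  have hS₀ecc : steinerEcc G k S₀ = k - 1 :=
    (steinerEcc_le hS₀span).antisymm (hlower S₀ hS₀)
  have hmem : k - 1 ∈ {m | ∃ S' : Finset V, S'.card = k' ∧ steinerEcc G k S' = m} :=
    ⟨S₀, hS₀, hS₀ecc⟩
  refine (Nat.sInf_le hmem).antisymm (le_csInf ⟨_, hmem⟩ ?_)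
  rintro _ ⟨S', hS', rfl⟩
  exact hlower S' hS'

end Fintype

end SimpleGraph

theorem stmt13_general (r k k' : ℕ) (hr : 2 ≤ r) (n : Fin r → ℕ)
    (hpos : ∀ i, 0 < n i) (hk' : 2 ≤ k') (hk'k : k' ≤ k) (horder : k ≤ ∑ i, n i) :
    steinerRadius (completeMultipartiteGraph (fun i : Fin r => Fin (n i))) k k' = k - 1 := by
  let a : Σ i : Fin r, Fin (n i) := ⟨⟨0, by omega⟩, ⟨0, hpos _⟩⟩
  let b : Σ i : Fin r, Fin (n i) := ⟨⟨1, by omega⟩, ⟨0, hpos _⟩⟩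
  have hab : a.1 ≠ b.1 := by simp [a, b]
  have hcard : k ≤ Fintype.card (Σ i : Fin r, Fin (n i)) := by simpa using horder
  obtain ⟨S₀, habS₀, hS₀⟩ := Finset.exists_superset_card_eq (s := {a, b})
    ((Finset.card_pair fun h => hab (congrArg Sigma.fst h)).trans_le hk') (hk'k.trans hcard)
  have haS₀ : a ∈ S₀ := habS₀ (by simp)
  have hbS₀ : b ∈ S₀ := habS₀ (by simp)
  have hG := (induceUnivIso _).connected_iff.mp
    (connected_induce_completeMultipartiteGraph (Set.mem_univ a) (Set.mem_univ b) hab)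
  refine steinerRadius_eq_sub_one hG hk'k hcard S₀ hS₀ fun S hS hS₀S => hS ▸ ?_
  exact steinerDist_le_card_sub_one <| connected_induce_completeMultipartiteGraph
    (Finset.mem_coe.mpr (hS₀S haS₀)) (Finset.mem_coe.mpr (hS₀S hbS₀)) hab

theorem stmt13 (r k k' : ℕ) (hr : 2 ≤ r) (n : Fin r → ℕ) (hmono : Monotone n)
    (hpos : ∀ i, 0 < n i) (hk' : 2 ≤ k') (hk'k : k' ≤ k) (horder : k ≤ ∑ i, n i) :
    steinerRadius (completeMultipartiteGraph (fun i : Fin r => Fin (n i))) k k' = k - 1 :=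
  stmt13_general r k k' hr n hpos hk' hk'k horder
end

section
/- Let k ≥ 3 and let T be a tree with at least k pendant vertices. Let S be a k-subset of the leaves of T and v ∈ S. Then d_T(S) = d_T(S \ {v}) + l_v(S), where l_v(S) is the distance in T from v to the nearest branching vertex (vertex of degree ≥ 3) of the Steiner tree T_S of S. -/
open SimpleGraph

/-! In a tree the union of the paths from one terminal of `S` to all the others lies inside
every connected subgraph spanning `S`, so it is the unique minimum one. Let `U` be this subgraph
for `S \ {v}`, `w₀` its vertex nearest to `v` and `p` a shortest `v`–`w₀` path. Then `p` meets
`U` only in `w₀`, and `U ∪ p` is connected, spans `S` and lies inside the Steiner subgraph of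
`S`, so it is that subgraph; it has `d(S \ {v}) + d(v, w₀)` edges. Off `U` every vertex of
`U ∪ p` has degree at most 2. The vertex `w₀` has a neighbour in `U` and one on `p`, so it is
not a leaf of the tree, hence not a terminal; it is therefore interior to a path of `U` and has
degree at least 3 in `U ∪ p`. So `w₀` is the branching vertex nearest to `v`. -/

namespace SimpleGraph

variable {V : Type*} {G : SimpleGraph V}

lemma Subgraph.ncard_neighborSet_le_degree (H : G.Subgraph) (w : V)
    [Fintype (G.neighborSet w)] : (H.neighborSet w).ncard ≤ G.degree w := by
  calc (H.neighborSet w).ncard ≤ (G.neighborSet w).ncard :=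
        Set.ncard_le_ncard (H.neighborSet_subset w) (Set.toFinite _)
    _ = G.degree w := by
      rw [← coe_neighborFinset, Set.ncard_coe_finset, card_neighborFinset_eq_degree]

lemma Subgraph.neighborSet_eq_of_edgeSet_eq {H K : G.Subgraph} (h : H.edgeSet = K.edgeSet)
    (w : V) : H.neighborSet w = K.neighborSet w := by
  ext y
  simp only [Subgraph.mem_neighborSet, ← Subgraph.mem_edgeSet, h]

namespace Walk

section IsPath

variable {u v w : V} {p : G.Walk u v}

lemma IsPath.ncard_neighborSet_toSubgraph_eq_two (hp : p.IsPath) (hw : w ∈ p.support)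
    (hwu : w ≠ u) (hwv : w ≠ v) : (p.toSubgraph.neighborSet w).ncard = 2 := by
  obtain ⟨i, rfl, hi⟩ := mem_support_iff_exists_getVert.mp hw
  have hi0 : i ≠ 0 := by rintro rfl; exact hwu p.getVert_zero
  have hil : i ≠ p.length := by rintro rfl; exact hwv p.getVert_length
  exact hp.ncard_neighborSet_toSubgraph_internal_eq_two hi0 (by omega)

lemma IsPath.ncard_neighborSet_toSubgraph_le_two (hp : p.IsPath) (w : V) :
    (p.toSubgraph.neighborSet w).ncard ≤ 2 := by
  by_cases hnil : p.Nil
  · rw [Set.eq_empty_of_forall_notMem (s := p.toSubgraph.neighborSet w)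
      fun y h => not_nil_of_adj_toSubgraph h hnil]
    simp
  by_cases hwu : w = u
  · subst hwu; simp [hp.neighborSet_toSubgraph_startpoint hnil]
  by_cases hwv : w = v
  · subst hwv; simp [hp.neighborSet_toSubgraph_endpoint hnil]
  by_cases hw : w ∈ p.support
  · exact (hp.ncard_neighborSet_toSubgraph_eq_two hw hwu hwv).le
  · rw [Set.eq_empty_of_forall_notMem (s := p.toSubgraph.neighborSet w)
      fun y h => hw (mem_support_of_adj_toSubgraph h)]
    simp

end IsPath

section ShortestPathToSubgraph

variable {U : G.Subgraph} {v w₀ : V} {p : G.Walk v w₀}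

lemma ncard_neighborSet_sup_toSubgraph_le_two (hp : p.IsPath) {w : V} (hw : w ∉ U.verts) :
    ((U ⊔ p.toSubgraph).neighborSet w).ncard ≤ 2 := by
  have hU : U.neighborSet w = ∅ := Set.eq_empty_of_forall_notMem fun _ h => hw h.fst_mem
  rw [Subgraph.neighborSet_sup, hU, Set.empty_union]
  exact hp.ncard_neighborSet_toSubgraph_le_two w

lemma eq_of_mem_support_of_mem_verts (hmin : ∀ x ∈ U.verts, G.dist v w₀ ≤ G.dist v x)
    (hp : p.length = G.dist v w₀) {x : V} (hx : x ∈ p.support) (hxU : x ∈ U.verts) :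
    x = w₀ := by
  classical
  have hsplit := congrArg length (p.take_spec hx)
  rw [length_append] at hsplit
  have hx_dist : G.dist v x ≤ (p.takeUntil x hx).length := dist_le _
  have hx_min := hmin x hxU
  exact eq_of_length_eq_zero (by omega : (p.dropUntil x hx).length = 0)

lemma disjoint_edgeSet_toSubgraph (hmin : ∀ x ∈ U.verts, G.dist v w₀ ≤ G.dist v x)
    (hp : p.length = G.dist v w₀) : Disjoint U.edgeSet p.toSubgraph.edgeSet := by
  refine Set.disjoint_left.mpr fun e heU hep => ?_
  induction e using Sym2.ind with
  | _ x y =>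
    rw [mem_edges_toSubgraph] at hep
    have hxy : U.Adj x y := heU
    exact hxy.ne ((eq_of_mem_support_of_mem_verts hmin hp (fst_mem_support_of_mem_edges p hep)
      hxy.fst_mem).trans (eq_of_mem_support_of_mem_verts hmin hp
        (snd_mem_support_of_mem_edges p hep) hxy.snd_mem).symm)

lemma ncard_edgeSet_sup_toSubgraph [Finite V]
    (hmin : ∀ x ∈ U.verts, G.dist v w₀ ≤ G.dist v x) (hp : p.length = G.dist v w₀) :
    (U ⊔ p.toSubgraph).edgeSet.ncard = U.edgeSet.ncard + G.dist v w₀ := by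
  classical
  have hpath : p.IsPath := p.isPath_of_length_eq_dist hp
  rw [Subgraph.edgeSet_sup, Set.ncard_union_eq (disjoint_edgeSet_toSubgraph hmin hp),
    edgeSet_toSubgraph, edgeSet, ← List.coe_toFinset, Set.ncard_coe_finset,
    List.toFinset_card_of_nodup hpath.edges_nodup, length_edges, hp]

lemma ncard_neighborSet_sup_toSubgraph_end [Finite V]
    (hmin : ∀ x ∈ U.verts, G.dist v w₀ ≤ G.dist v x) (hp : p.length = G.dist v w₀)
    (hv : v ∉ U.verts) (hw₀ : w₀ ∈ U.verts) :
    ((U ⊔ p.toSubgraph).neighborSet w₀).ncard = (U.neighborSet w₀).ncard + 1 := by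
  have hnil : ¬p.Nil := not_nil_of_ne fun h => hv (h ▸ hw₀)
  have hpen : p.penultimate ∉ U.neighborSet w₀ := fun h =>
    (p.adj_penultimate hnil).ne (eq_of_mem_support_of_mem_verts hmin hp
      (mem_support_of_adj_toSubgraph (p.toSubgraph_adj_penultimate hnil)) h.snd_mem)
  rw [Subgraph.neighborSet_sup,
    (p.isPath_of_length_eq_dist hp).neighborSet_toSubgraph_endpoint hnil, Set.union_singleton,
    Set.ncard_insert_of_notMem hpen]

end ShortestPathToSubgraph

end Walk

lemma IsAcyclic.toSubgraph_le_of_connected {u v : V} (hG : G.IsAcyclic) {p : G.Walk u v}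
    (hp : p.IsPath) {H : G.Subgraph} (hH : H.Connected) (hu : u ∈ H.verts) (hv : v ∈ H.verts) :
    p.toSubgraph ≤ H := by
  classical
  obtain ⟨q, hq⟩ := H.preconnected_iff_forall_exists_walk_subgraph.mp hH.preconnected hu hv
  have hqp : q.bypass = p :=
    congrArg Subtype.val ((hG.subsingleton_path u v).elim ⟨_, q.bypass_isPath⟩ ⟨p, hp⟩)
  exact hqp ▸ q.toSubgraph_bypass_le_toSubgraph.trans hq

namespace IsTree

variable (hT : G.IsTree)

noncomputable def path (a b : V) : G.Walk a b := (hT.existsUnique_path a b).exists.choose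

lemma isPath_path (a b : V) : (hT.path a b).IsPath :=
  (hT.existsUnique_path a b).exists.choose_spec

noncomputable def steinerSubgraph (a₀ : V) (S : Finset V) : G.Subgraph :=
  S.sup fun b => (hT.path a₀ b).toSubgraph

variable {hT} {a₀ : V} {S : Finset V}

lemma mem_verts_steinerSubgraph {x : V} :
    x ∈ (hT.steinerSubgraph a₀ S).verts ↔ ∃ b ∈ S, x ∈ (hT.path a₀ b).support := by
  classical
  induction S using Finset.induction with
  | empty => simp [steinerSubgraph]
  | insert b S _ ih =>
    simp only [steinerSubgraph, Finset.sup_insert, Subgraph.verts_sup, Set.mem_union,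
      Walk.mem_verts_toSubgraph, Finset.exists_mem_insert] at ih ⊢
    rw [ih]

lemma toSubgraph_path_le_steinerSubgraph {b : V} (hb : b ∈ S) :
    (hT.path a₀ b).toSubgraph ≤ hT.steinerSubgraph a₀ S :=
  Finset.le_sup (f := fun b => (hT.path a₀ b).toSubgraph) hb

lemma subset_verts_steinerSubgraph : ↑S ⊆ (hT.steinerSubgraph a₀ S).verts := fun b hb =>
  (toSubgraph_path_le_steinerSubgraph hb).1 (hT.path a₀ b).end_mem_verts_toSubgraph

lemma steinerSubgraph_mono {S' : Finset V} (h : S' ⊆ S) :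
    hT.steinerSubgraph a₀ S' ≤ hT.steinerSubgraph a₀ S :=
  Finset.sup_mono h

lemma steinerSubgraph_le {H : G.Subgraph} (hH : H.Connected) (ha₀ : a₀ ∈ H.verts)
    (hS : ↑S ⊆ H.verts) : hT.steinerSubgraph a₀ S ≤ H :=
  Finset.sup_le fun b hb => hT.2.toSubgraph_le_of_connected (hT.isPath_path a₀ b) hH ha₀ (hS hb)

lemma steinerSubgraph_connected (hS : S.Nonempty) : (hT.steinerSubgraph a₀ S).Connected := by
  induction hS using Finset.Nonempty.cons_induction with
  | singleton b => simpa [steinerSubgraph] using (hT.path a₀ b).toSubgraph_connected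
  | cons b S _ hS ih =>
    rw [steinerSubgraph, Finset.sup_cons]
    obtain ⟨c, hc⟩ := hS
    exact Subgraph.connected_sup (hT.path a₀ b).toSubgraph_connected.preconnected
      ih.preconnected ⟨a₀, (hT.path a₀ b).start_mem_verts_toSubgraph,
        (toSubgraph_path_le_steinerSubgraph hc).1 (hT.path a₀ c).start_mem_verts_toSubgraph⟩

variable [Finite V]

variable (hT) in
lemma steinerDist_eq_ncard (ha₀ : a₀ ∈ S) :
    steinerDist G S = (hT.steinerSubgraph a₀ S).edgeSet.ncard := by
  have hfeas : (hT.steinerSubgraph a₀ S).edgeSet.ncard ∈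
      {n | ∃ H : G.Subgraph, H.Connected ∧ ↑S ⊆ H.verts ∧ H.edgeSet.ncard = n} :=
    ⟨_, steinerSubgraph_connected ⟨a₀, ha₀⟩, subset_verts_steinerSubgraph, rfl⟩
  refine le_antisymm (Nat.sInf_le hfeas) (le_csInf ⟨_, hfeas⟩ ?_)
  rintro n ⟨H, hH, hS, rfl⟩
  exact Set.ncard_le_ncard (Subgraph.edgeSet_mono (steinerSubgraph_le hH (hS ha₀) hS))
    (Set.toFinite _)

lemma edgeSet_eq_of_ncard_le_steinerDist {H : G.Subgraph} (hH : H.Connected)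
    (hS : ↑S ⊆ H.verts) (ha₀ : a₀ ∈ S) (hle : H.edgeSet.ncard ≤ steinerDist G S) :
    H.edgeSet = (hT.steinerSubgraph a₀ S).edgeSet :=
  (Set.eq_of_subset_of_ncard_le (Subgraph.edgeSet_mono (steinerSubgraph_le hH (hS ha₀) hS))
    (hle.trans (hT.steinerDist_eq_ncard ha₀).le) (Set.toFinite _)).symm

lemma two_le_ncard_neighborSet_steinerSubgraph {x : V}
    (hx : x ∈ (hT.steinerSubgraph a₀ S).verts) (hxS : x ∉ S) (ha₀ : a₀ ∈ S) :
    2 ≤ ((hT.steinerSubgraph a₀ S).neighborSet x).ncard := by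
  obtain ⟨b, hb, hxb⟩ := mem_verts_steinerSubgraph.mp hx
  calc 2 = ((hT.path a₀ b).toSubgraph.neighborSet x).ncard :=
        ((hT.isPath_path a₀ b).ncard_neighborSet_toSubgraph_eq_two hxb (by grind) (by grind)).symm
    _ ≤ _ := Set.ncard_le_ncard
        (Subgraph.neighborSet_subset_of_subgraph (toSubgraph_path_le_steinerSubgraph hb) x)
        (Set.toFinite _)

lemma mem_of_mem_verts_steinerSubgraph_of_degree_eq_one {x : V} [Fintype (G.neighborSet x)]
    (hx : x ∈ (hT.steinerSubgraph a₀ S).verts) (ha₀ : a₀ ∈ S) (hdeg : G.degree x = 1) :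
    x ∈ S := by
  by_contra hxS
  have hlt := (two_le_ncard_neighborSet_steinerSubgraph hx hxS ha₀).trans
    ((hT.steinerSubgraph a₀ S).ncard_neighborSet_le_degree x)
  omega

lemma edgeSet_steinerSubgraph_eq_sup [DecidableEq V] {v w₀ : V} {p : G.Walk v w₀}
    (ha₀ : a₀ ∈ S.erase v) (hv : v ∈ S)
    (hw₀ : w₀ ∈ (hT.steinerSubgraph a₀ (S.erase v)).verts) (hp : p.IsPath) :
    (hT.steinerSubgraph a₀ S).edgeSet =
      (hT.steinerSubgraph a₀ (S.erase v) ⊔ p.toSubgraph).edgeSet := by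
  have hle : hT.steinerSubgraph a₀ (S.erase v) ≤ hT.steinerSubgraph a₀ S :=
    steinerSubgraph_mono (S.erase_subset v)
  have hpath : p.toSubgraph ≤ hT.steinerSubgraph a₀ S := hT.2.toSubgraph_le_of_connected hp
    (steinerSubgraph_connected ⟨v, hv⟩) (subset_verts_steinerSubgraph hv) (hle.1 hw₀)
  have hconn : (hT.steinerSubgraph a₀ (S.erase v) ⊔ p.toSubgraph).Connected :=
    Subgraph.connected_sup (steinerSubgraph_connected ⟨a₀, ha₀⟩).preconnected
      p.toSubgraph_connected.preconnected ⟨w₀, hw₀, p.end_mem_verts_toSubgraph⟩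
  have hS : ↑S ⊆ (hT.steinerSubgraph a₀ (S.erase v) ⊔ p.toSubgraph).verts := fun x hx => by
    by_cases hxv : x = v
    · exact Or.inr (hxv ▸ p.start_mem_verts_toSubgraph)
    · exact Or.inl (subset_verts_steinerSubgraph (Finset.mem_erase.mpr ⟨hxv, hx⟩))
  refine (edgeSet_eq_of_ncard_le_steinerDist hconn hS (Finset.mem_of_mem_erase ha₀) ?_).symm
  rw [hT.steinerDist_eq_ncard (Finset.mem_of_mem_erase ha₀)]
  exact Set.ncard_le_ncard (Subgraph.edgeSet_mono (sup_le hle hpath)) (Set.toFinite _)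

end IsTree

lemma IsTree.three_le_ncard_neighborSet_sup_toSubgraph [Fintype V] [DecidableRel G.Adj]
    (hT : G.IsTree) {S : Finset V} {a₀ v w₀ : V} {p : G.Walk v w₀}
    (hleaf : ∀ b ∈ S, G.degree b = 1) (hS : 2 ≤ S.card) (ha₀ : a₀ ∈ S)
    (hv : v ∉ (hT.steinerSubgraph a₀ S).verts)
    (hw₀ : w₀ ∈ (hT.steinerSubgraph a₀ S).verts)
    (hmin : ∀ x ∈ (hT.steinerSubgraph a₀ S).verts, G.dist v w₀ ≤ G.dist v x)
    (hp : p.length = G.dist v w₀) :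
    3 ≤ ((hT.steinerSubgraph a₀ S ⊔ p.toSubgraph).neighborSet w₀).ncard := by
  have hcard := p.ncard_neighborSet_sup_toSubgraph_end hmin hp hv hw₀
  have hw₀S : w₀ ∉ S := by
    intro hw₀S
    obtain ⟨b, hb, hbw₀⟩ := Finset.exists_mem_ne hS w₀
    have : Nontrivial (hT.steinerSubgraph a₀ S).verts :=
      (Set.nontrivial_of_mem_mem_ne hw₀ (subset_verts_steinerSubgraph hb) hbw₀.symm).coe_sort
    obtain ⟨y, hy⟩ :=
      (steinerSubgraph_connected ⟨a₀, ha₀⟩).preconnected.exists_adj_of_nontrivial ⟨w₀, hw₀⟩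
    have hpos : 0 < ((hT.steinerSubgraph a₀ S).neighborSet w₀).ncard :=
      (Set.ncard_pos (Set.toFinite _)).mpr ⟨y, hy⟩
    have hdeg := (hT.steinerSubgraph a₀ S ⊔ p.toSubgraph).ncard_neighborSet_le_degree w₀
    have hdeg_one := hleaf w₀ hw₀S
    omega
  have hU := two_le_ncard_neighborSet_steinerSubgraph hw₀ hw₀S ha₀
  omega

end SimpleGraph

open SimpleGraph

theorem stmt14_general {V : Type*} [Fintype V] [DecidableEq V] (G : SimpleGraph V)
    [DecidableRel G.Adj] (hT : G.IsTree) (k : ℕ) (hk : 3 ≤ k)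
    (S : Finset V) (hS : S.card = k)
    (hSleaf : ∀ v ∈ S, G.degree v = 1) (v : V) (hv : v ∈ S)
    (H : G.Subgraph) (hHc : H.Connected) (hHS : ↑S ⊆ H.verts)
    (hHmin : H.edgeSet.ncard = steinerDist G S) :
    steinerDist G S = steinerDist G (S.erase v) +
      sInf {d | ∃ w ∈ H.verts, 3 ≤ (H.neighborSet w).ncard ∧ G.dist v w = d} := by
  have hS' : 2 ≤ (S.erase v).card := by rw [Finset.card_erase_of_mem hv]; omega
  obtain ⟨a₀, ha₀⟩ : (S.erase v).Nonempty := Finset.card_pos.mp (by omega)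
  set U := hT.steinerSubgraph a₀ (S.erase v)
  obtain ⟨w₀, hw₀, hmin⟩ := Set.exists_min_image U.verts (G.dist v) (Set.toFinite _)
    ⟨a₀, IsTree.subset_verts_steinerSubgraph ha₀⟩
  obtain ⟨p, hpath, hp⟩ := hT.connected.exists_path_of_dist v w₀
  have hvU : v ∉ U.verts := fun h =>
    Finset.notMem_erase v S
      (IsTree.mem_of_mem_verts_steinerSubgraph_of_degree_eq_one h ha₀ (hSleaf v hv))
  have hHU : H.edgeSet = (U ⊔ p.toSubgraph).edgeSet :=
    (IsTree.edgeSet_eq_of_ncard_le_steinerDist hHc hHS (Finset.mem_of_mem_erase ha₀)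
      hHmin.le).trans (IsTree.edgeSet_steinerSubgraph_eq_sup ha₀ hv hw₀ hpath)
  have hnbr := Subgraph.neighborSet_eq_of_edgeSet_eq hHU
  have hbranch : ∀ w, 3 ≤ (H.neighborSet w).ncard → w ∈ U.verts := fun w h => by_contra fun hw =>
    absurd (p.ncard_neighborSet_sup_toSubgraph_le_two hpath hw) (by rw [← hnbr w]; omega)
  have hw₀H : 3 ≤ (H.neighborSet w₀).ncard := hnbr w₀ ▸
    hT.three_le_ncard_neighborSet_sup_toSubgraph
      (fun b hb => hSleaf b (Finset.mem_of_mem_erase hb)) hS' ha₀ hvU hw₀ hmin hp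
  obtain ⟨y, hy⟩ := Set.nonempty_of_ncard_ne_zero (by omega : (H.neighborSet w₀).ncard ≠ 0)
  have hsInf : sInf {d | ∃ w ∈ H.verts, 3 ≤ (H.neighborSet w).ncard ∧ G.dist v w = d} =
      G.dist v w₀ :=
    le_antisymm (Nat.sInf_le ⟨w₀, hy.fst_mem, hw₀H, rfl⟩)
      (le_csInf ⟨_, w₀, hy.fst_mem, hw₀H, rfl⟩
        fun _ ⟨w, _, hw, hd⟩ => hd ▸ hmin w (hbranch w hw))
  rw [hsInf, ← hHmin, hHU, p.ncard_edgeSet_sup_toSubgraph hmin hp,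
    ← hT.steinerDist_eq_ncard ha₀]

theorem stmt14 {V : Type*} [Fintype V] [DecidableEq V] (G : SimpleGraph V)
    [DecidableRel G.Adj] (hT : G.IsTree) (k : ℕ) (hk : 3 ≤ k)
    (hleaves : k ≤ leafCount G) (S : Finset V) (hS : S.card = k)
    (hSleaf : ∀ v ∈ S, G.degree v = 1) (v : V) (hv : v ∈ S)
    (H : G.Subgraph) (hHc : H.Connected) (hHS : ↑S ⊆ H.verts)
    (hHmin : H.edgeSet.ncard = steinerDist G S) :
    steinerDist G S = steinerDist G (S.erase v) +
      sInf {d | ∃ w ∈ H.verts, 3 ≤ (H.neighborSet w).ncard ∧ G.dist v w = d} :=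
  stmt14_general G hT k hk S hS hSleaf v hv H hHc hHS hHmin
end

section
/- Let n ≥ k ≥ 3, k' ≥ 1 with k − k' ≥ 2, and let T be a tree of order n. Then Sd_{k−k'}(T) ≤ Sr_{k,k'}(T). -/
open SimpleGraph

theorem stmt16 {V : Type*} [Fintype V] [DecidableEq V] (G : SimpleGraph V)
    (hT : G.IsTree) (n k k' : ℕ) (hn : Fintype.card V = n)
    (hk : 3 ≤ k) (hkn : k ≤ n) (hk' : 1 ≤ k') (hkk' : k' + 2 ≤ k) :
    steinerDiam G (k - k') ≤ steinerRadius G k k' := by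
  have hconn : G.Connected := hT.isConnected
  have htop : (⊤ : G.Subgraph).Connected := by
    rw [Subgraph.connected_iff']
    exact (Subgraph.topIso (G := G)).connected_iff.mpr hconn
  -- monotonicity of steinerDist
  have hmono : ∀ S S'' : Finset V, S ⊆ S'' → steinerDist G S ≤ steinerDist G S'' := by
    intro S S'' hsub
    apply csInf_le_csInf (OrderBot.bddBelow _)
    · exact ⟨(⊤ : G.Subgraph).edgeSet.ncard, ⊤, htop, by simp [Subgraph.verts_top],
        rfl⟩
    · rintro m ⟨H, hH, hv, he⟩
      exact ⟨H, hH, (Finset.coe_subset.mpr hsub).trans hv, he⟩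
  -- radius set nonempty
  obtain ⟨S₀, hS₀⟩ : ∃ S₀ : Finset V, S₀.card = k' := by
    obtain ⟨u, -, hu⟩ := Finset.exists_superset_card_eq (s := (∅ : Finset V))
      (n := k') (by simp) (by omega)
    exact ⟨u, hu⟩
  refine le_csInf ⟨steinerEcc G k S₀, S₀, hS₀, rfl⟩ ?_
  rintro m ⟨S', hS', rfl⟩
  apply Finset.sup_le
  intro S hS
  simp only [Finset.mem_filter, Finset.mem_univ, true_and] at hS
  obtain ⟨S'', hsub, hcard⟩ := Finset.exists_superset_card_eq
    (s := S ∪ S') (n := k)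
    (le_trans (Finset.card_union_le _ _) (by omega)) (by omega)
  calc steinerDist G S ≤ steinerDist G S'' :=
        hmono _ _ ((Finset.subset_union_left).trans hsub)
    _ ≤ steinerEcc G k S' := by
        apply Finset.le_sup
        simp only [Finset.mem_filter, Finset.mem_univ, true_and]
        exact ⟨hcard, (Finset.subset_union_right).trans hsub⟩
end

section
/- Let n ≥ k ≥ 3 and k > k' ≥ 1, and let T be a tree of order n. Then Sd_k(T) ≤ (k / (k − k')) · Sr_{k,k'}(T). -/
open SimpleGraph

/-!
Fix a `k'`-set `W` attaining the radius `r` and a root `w ∈ W`. For `A ⊆ V` let `E(A)` be the set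
of edges of the paths from `w` to the vertices of `A`. For a `k`-set `S`, `E(S)` spans a connected
subgraph containing `S`, so `d(S) ≤ |E(S)|`. In a tree every connected subgraph containing `w` and
`A` contains `E(A)`; as `W ∪ A` lies in a `k`-set containing `W`, this gives `|E(A)| ≤ r` for every
`(k - k')`-subset `A ⊆ S`. Every edge of `E(S)` lies in `E(A)` for at least `C(k - 1, k - k' - 1)`
of these `A`, and double counting yields `(k - k') |E(S)| ≤ k r`.
-/

open Finset

namespace Finset

variable {α β : Type*} [DecidableEq α] [DecidableEq β]

theorem choose_le_card_filter_mem_powersetCard {S : Finset α} {s : α} (hs : s ∈ S) (i : ℕ) :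
    (#S - 1).choose i ≤ #{A ∈ S.powersetCard (i + 1) | s ∈ A} := by
  have hsB : ∀ B ∈ (S.erase s).powersetCard i, s ∉ B := fun B hB hsB =>
    notMem_erase s S ((mem_powersetCard.1 hB).1 hsB)
  rw [← card_erase_of_mem hs, ← card_powersetCard]
  refine card_le_card_of_injOn (insert s) (fun B hB => ?_) (fun B hB B' hB' hBB' => ?_)
  · obtain ⟨hBS, hBcard⟩ := mem_powersetCard.1 (mem_coe.1 hB)
    refine mem_filter.2 ⟨mem_powersetCard.2 ⟨insert_subset hs (hBS.trans (erase_subset s S)), ?_⟩,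
      mem_insert_self s B⟩
    rw [card_insert_of_notMem (hsB B hB), hBcard]
  · rw [← erase_insert (hsB B hB), ← erase_insert (hsB B' hB'), hBB']

theorem mul_card_biUnion_le_of_forall_powersetCard (S : Finset α) (f : α → Finset β) {j r : ℕ}
    (hjS : j ≤ #S) (h : ∀ A ∈ S.powersetCard j, #(A.biUnion f) ≤ r) :
    j * #(S.biUnion f) ≤ #S * r := by
  obtain _ | i := j
  · simp
  obtain ⟨m, hm⟩ : ∃ m, #S = m + 1 := ⟨#S - 1, by omega⟩
  have hcover : ∀ b ∈ S.biUnion f, m.choose i ≤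
      #((S.powersetCard (i + 1)).bipartiteBelow (fun A b => b ∈ A.biUnion f) b) := by
    intro b hb
    obtain ⟨s, hs, hbs⟩ := mem_biUnion.1 hb
    refine (hm ▸ choose_le_card_filter_mem_powersetCard hs i).trans (card_le_card fun A hA => ?_)
    obtain ⟨hA, hsA⟩ := mem_filter.1 hA
    exact (mem_bipartiteBelow _).2 ⟨hA, mem_biUnion.2 ⟨s, hsA, hbs⟩⟩
  have hdouble := card_mul_le_card_mul' (fun A b => b ∈ A.biUnion f) hcover
    (fun A hA => (card_le_card fun b hb => ((mem_bipartiteAbove _).1 hb).2).trans (h A hA))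
  rw [card_powersetCard, hm] at hdouble
  have habsorb := Nat.add_one_mul_choose_eq m i
  have hpos : 0 < m.choose i := Nat.choose_pos (by omega)
  refine Nat.le_of_mul_le_mul_right ?_ hpos
  calc (i + 1) * #(S.biUnion f) * m.choose i = (i + 1) * (#(S.biUnion f) * m.choose i) := by ring
    _ ≤ (i + 1) * ((m + 1).choose (i + 1) * r) := Nat.mul_le_mul_left _ hdouble
    _ = (m + 1).choose (i + 1) * (i + 1) * r := by ring
    _ = #S * r * m.choose i := by rw [← habsorb, hm]; ring

end Finset

section Steiner

variable {V : Type*} {G : SimpleGraph V}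

theorem SimpleGraph.Subgraph.connected_top (hG : G.Connected) :
    (⊤ : G.Subgraph).Connected :=
  (Subgraph.connected_iff_forall_exists_walk_subgraph ⊤).2
    ⟨⟨hG.nonempty.some, trivial⟩, fun _ _ => ⟨(hG.preconnected _ _).some, le_top⟩⟩

theorem SimpleGraph.IsAcyclic.toSubgraph_le_of_isPath (hG : G.IsAcyclic) {u v : V}
    {p : G.Walk u v} (hp : p.IsPath) {H : G.Subgraph} (hH : H.Preconnected)
    (hu : u ∈ H.verts) (hv : v ∈ H.verts) : p.toSubgraph ≤ H := by
  classical
  obtain ⟨q, hq⟩ := (Subgraph.preconnected_iff_forall_exists_walk_subgraph H).1 hH hu hv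
  have hpq : p = q.bypass :=
    congrArg Subtype.val ((hG.subsingleton_path u v).elim ⟨p, hp⟩ ⟨q.bypass, q.bypass_isPath⟩)
  exact hpq ▸ Walk.toSubgraph_bypass_le_toSubgraph.trans hq

theorem steinerDist_le_ncard {S : Finset V} {H : G.Subgraph} (hH : H.Connected)
    (hS : ↑S ⊆ H.verts) : steinerDist G S ≤ H.edgeSet.ncard :=
  Nat.sInf_le ⟨H, hH, hS, rfl⟩

theorem exists_steinerDist_eq (hG : G.Connected) (S : Finset V) :
    ∃ H : G.Subgraph, H.Connected ∧ ↑S ⊆ H.verts ∧ H.edgeSet.ncard = steinerDist G S := by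
  have hne : {n | ∃ H : G.Subgraph, H.Connected ∧ ↑S ⊆ H.verts ∧ H.edgeSet.ncard = n}.Nonempty :=
    ⟨_, ⊤, Subgraph.connected_top hG, Set.subset_univ _, rfl⟩
  exact Nat.sInf_mem hne

theorem steinerDist_mono (hG : G.Connected) {S T : Finset V} (hST : S ⊆ T) :
    steinerDist G S ≤ steinerDist G T := by
  obtain ⟨H, hH, hT, hcard⟩ := exists_steinerDist_eq hG T
  exact hcard ▸ steinerDist_le_ncard hH ((coe_subset.2 hST).trans hT)

variable [DecidableEq V] {w : V}

theorem exists_connected_subgraph_edgeSet_subset (P : ∀ s, G.Walk w s) (X : Finset V) :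
    ∃ H : G.Subgraph, H.Connected ∧ w ∈ H.verts ∧ ↑X ⊆ H.verts ∧
      H.edgeSet ⊆ ↑(X.biUnion fun s => (P s).edges.toFinset) := by
  induction X using Finset.induction_on with
  | empty =>
    exact ⟨G.singletonSubgraph w, Subgraph.singletonSubgraph_connected, rfl, by simp, by simp⟩
  | insert s X _ ih =>
    obtain ⟨H, hH, hw, hX, hE⟩ := ih
    refine ⟨H ⊔ (P s).toSubgraph, Subgraph.connected_sup hH.preconnected
      (P s).toSubgraph_connected.preconnected ⟨w, hw, (P s).start_mem_verts_toSubgraph⟩,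
      Or.inl hw, ?_, ?_⟩
    · rw [coe_insert, Set.insert_subset_iff]
      exact ⟨Or.inr (P s).end_mem_verts_toSubgraph, hX.trans Set.subset_union_left⟩
    · rw [Subgraph.edgeSet_sup, Walk.edgeSet_toSubgraph, biUnion_insert, coe_union]
      exact Set.union_subset (hE.trans Set.subset_union_right)
        (fun e he => Set.mem_union_left _ (by simpa using he))

theorem steinerDist_le_card_biUnion_edges (P : ∀ s, G.Walk w s) (X : Finset V) :
    steinerDist G X ≤ #(X.biUnion fun s => (P s).edges.toFinset) := by
  obtain ⟨H, hH, -, hX, hE⟩ := exists_connected_subgraph_edgeSet_subset P X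
  exact (steinerDist_le_ncard hH hX).trans
    ((Set.ncard_le_ncard hE (finite_toSet _)).trans_eq (Set.ncard_coe_finset _))

theorem card_biUnion_edges_le_steinerDist [Finite V] (hG : G.IsTree) {P : ∀ s, G.Walk w s}
    (hP : ∀ s, (P s).IsPath) {X Y : Finset V} (hw : w ∈ Y) (hXY : X ⊆ Y) :
    #(X.biUnion fun s => (P s).edges.toFinset) ≤ steinerDist G Y := by
  obtain ⟨H, hH, hY, hcard⟩ := exists_steinerDist_eq hG.connected Y
  have hE : ↑(X.biUnion fun s => (P s).edges.toFinset) ⊆ H.edgeSet := by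
    intro e he
    obtain ⟨s, hs, hes⟩ := mem_biUnion.1 he
    refine Subgraph.edgeSet_mono (hG.isAcyclic.toSubgraph_le_of_isPath (hP s) hH.preconnected
      (hY hw) (hY (hXY hs))) ?_
    simpa using hes
  rw [← hcard, ← Set.ncard_coe_finset]
  exact Set.ncard_le_ncard hE

end Steiner

section Radius

variable {V : Type*} [Fintype V] [DecidableEq V] {G : SimpleGraph V}

theorem steinerDist_le_steinerEcc (hG : G.Connected) {k : ℕ} {W X : Finset V} (hWX : W ⊆ X)
    (hX : #X ≤ k) (hk : k ≤ Fintype.card V) : steinerDist G X ≤ steinerEcc G k W := by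
  obtain ⟨Y, hXY, -, hY⟩ := exists_subsuperset_card_eq (subset_univ X) hX (by rwa [card_univ])
  exact (steinerDist_mono hG hXY).trans
    (le_sup (f := steinerDist G) (mem_filter.2 ⟨mem_univ Y, hY, hWX.trans hXY⟩))

theorem steinerDist_mul_le_steinerEcc (hG : G.IsTree) {S W : Finset V} (hW : W.Nonempty)
    (hWS : #W ≤ #S) : (#S - #W) * steinerDist G S ≤ #S * steinerEcc G #S W := by
  obtain ⟨w, hw⟩ := hW
  choose P hP using fun s => (hG.existsUnique_path w s).exists
  have hA : ∀ A ∈ S.powersetCard (#S - #W),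
      #(A.biUnion fun s => (P s).edges.toFinset) ≤ steinerEcc G #S W := by
    intro A hA
    obtain ⟨-, hAcard⟩ := mem_powersetCard.1 hA
    exact (card_biUnion_edges_le_steinerDist hG hP (mem_union_left A hw) subset_union_right).trans
      (steinerDist_le_steinerEcc hG.connected subset_union_left
        ((card_union_le W A).trans (by omega)) (card_le_univ S))
  calc (#S - #W) * steinerDist G S
      ≤ (#S - #W) * #(S.biUnion fun s => (P s).edges.toFinset) :=
        Nat.mul_le_mul_left _ (steinerDist_le_card_biUnion_edges P S)
    _ ≤ #S * steinerEcc G #S W :=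
        mul_card_biUnion_le_of_forall_powersetCard S _ (Nat.sub_le _ _) hA

theorem steinerDist_mul_le_steinerRadius (hG : G.IsTree) {k k' : ℕ} (hk' : 0 < k')
    (hk'k : k' ≤ k) {S : Finset V} (hS : #S = k) :
    (k - k') * steinerDist G S ≤ k * steinerRadius G k k' := by
  obtain ⟨W₀, -, hW₀⟩ := exists_subset_card_eq (s := univ) (n := k')
    (hk'k.trans (hS ▸ card_le_univ S) |>.trans_eq card_univ.symm)
  obtain ⟨W, hW, hWr⟩ := Nat.sInf_mem (s := {n | ∃ W : Finset V, #W = k' ∧ steinerEcc G k W = n})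
    ⟨_, W₀, hW₀, rfl⟩
  have hbound := steinerDist_mul_le_steinerEcc hG (card_pos.1 (hW ▸ hk')) (hW ▸ hS ▸ hk'k)
  rwa [hS, hW, hWr] at hbound

theorem steinerDiam_mul_le_steinerRadius (hG : G.IsTree) {k k' : ℕ} (hk' : 0 < k')
    (hk'k : k' < k) : steinerDiam G k * (k - k') ≤ k * steinerRadius G k k' := by
  refine (Nat.le_div_iff_mul_le (by omega)).1 (Finset.sup_le fun S hS => ?_)
  rw [Nat.le_div_iff_mul_le (by omega), mul_comm]
  exact steinerDist_mul_le_steinerRadius hG hk' hk'k.le (mem_filter.1 hS).2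

end Radius

theorem stmt17_general {V : Type*} [Fintype V] [DecidableEq V] (G : SimpleGraph V)
    (hT : G.IsTree) (k k' : ℕ) (hk' : 1 ≤ k') (hk'k : k' < k) :
    (steinerDiam G k : ℝ) ≤ (k / ((k : ℝ) - k')) * steinerRadius G k k' := by
  have hgap : ((k - k' : ℕ) : ℝ) = k - k' := Nat.cast_sub hk'k.le
  rw [div_mul_eq_mul_div, le_div_iff₀ (by rw [← hgap]; exact_mod_cast Nat.sub_pos_of_lt hk'k),
    ← hgap]
  exact_mod_cast steinerDiam_mul_le_steinerRadius hT hk' hk'k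

theorem stmt17 {V : Type*} [Fintype V] [DecidableEq V] (G : SimpleGraph V)
    (hT : G.IsTree) (n k k' : ℕ) (hn : Fintype.card V = n)
    (hk : 3 ≤ k) (hkn : k ≤ n) (hk' : 1 ≤ k') (hk'k : k' < k) :
    (steinerDiam G k : ℝ) ≤ (k / ((k : ℝ) - k')) * steinerRadius G k k' :=
  stmt17_general G hT k k' hk' hk'k
end
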